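/- arXiv:2604.14752 — 6 statements merged into one kernel-verified Lean document; each statement's English description precedes it below -/
import Mathlib

section
/- Fix λ > 0 and ε > 0 with 1 − 4λε² < 0, and let f solve ε² f'' + f' + λ f = 0 with f(0) = 0 and ε f'(0) = 1. Then f(t) = e^{−t/(2ε²)} (2ε/√(4λε²−1)) sin(√(4λε²−1) t/(2ε²)), and there exists a universal constant C (independent of λ, ε, t) such that |f(t)| ≤ C λ^{−1/2} e^{−t/(4ε²)} for all t ≥ 0. -/
/-!
The integrating factor `exp (t / (2ε²))` turns the damped equation into the harmonic oscillator
`u'' = -ω² u` with `ω = √(4λε² - 1) / (2ε²)`, whose solution is read off from two conserved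
quantities. For the bound put `a = √(4λε² - 1)` and `x = t / (4ε²)`, so that
`λ^(-1/2) = 2ε / √(1 + a²) ≥ 2ε / (1 + a)`. From `|sin z| ≤ 1` and `|sin z| ≤ |z|` we get
`(1 + a) |sin (2ax)| ≤ a (2x + 1) ≤ 2a eˣ`, and the factor `eˣ` is absorbed by half of the
decay `e^(-2x)`.
-/

open Real

theorem harmonic_oscillator_eq {ω : ℝ} (hω : ω ≠ 0) {u v : ℝ → ℝ}
    (hu : ∀ t, HasDerivAt u (v t) t) (hv : ∀ t, HasDerivAt v (-(ω ^ 2) * u t) t) (t : ℝ) :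
    u t = u 0 * cos (ω * t) + v 0 / ω * sin (ω * t) := by
  have hlin (s : ℝ) : HasDerivAt (ω * ·) ω s := by
    simpa using (hasDerivAt_id s).const_mul ω
  have hcos (s : ℝ) : HasDerivAt (fun s => cos (ω * s)) (-sin (ω * s) * ω) s :=
    (hasDerivAt_cos (ω * s)).comp s (hlin s)
  have hsin (s : ℝ) : HasDerivAt (fun s => sin (ω * s)) (cos (ω * s) * ω) s :=
    (hasDerivAt_sin (ω * s)).comp s (hlin s)
  -- `(P, Q)` is `(u, v / ω)` rotated by the angle `-ω s`, which the flow leaves fixed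
  set P : ℝ → ℝ := fun s => u s * cos (ω * s) - v s / ω * sin (ω * s)
  set Q : ℝ → ℝ := fun s => u s * sin (ω * s) + v s / ω * cos (ω * s)
  have hP (s : ℝ) : HasDerivAt P 0 s :=
    (((hu s).mul (hcos s)).sub (((hv s).div_const ω).mul (hsin s))).congr_deriv
      (by field_simp; ring)
  have hQ (s : ℝ) : HasDerivAt Q 0 s :=
    (((hu s).mul (hsin s)).add (((hv s).div_const ω).mul (hcos s))).congr_deriv
      (by field_simp; ring)
  have hPt := is_const_of_deriv_eq_zero (fun s => (hP s).differentiableAt)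
    (fun s => (hP s).deriv) t 0
  have hQt := is_const_of_deriv_eq_zero (fun s => (hQ s).differentiableAt)
    (fun s => (hQ s).deriv) t 0
  simp only [P, Q, mul_zero, cos_zero, sin_zero, mul_one] at hPt hQt
  linear_combination cos (ω * t) * hPt + sin (ω * t) * hQt - u t * sin_sq_add_cos_sq (ω * t)

theorem underdamped_eq {lam ε : ℝ} {f f' f'' : ℝ → ℝ} (hε : ε ≠ 0)
    (hD : 0 < 4 * lam * ε ^ 2 - 1) (hf : ∀ t, HasDerivAt f (f' t) t)
    (hf' : ∀ t, HasDerivAt f' (f'' t) t) (hode : ∀ t, ε ^ 2 * f'' t + f' t + lam * f t = 0)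
    (hf0 : f 0 = 0) (hf'0 : ε * f' 0 = 1) (t : ℝ) :
    f t = exp (-(t / (2 * ε ^ 2))) * (2 * ε / √(4 * lam * ε ^ 2 - 1)) *
      sin (√(4 * lam * ε ^ 2 - 1) * t / (2 * ε ^ 2)) := by
  set D := 4 * lam * ε ^ 2 - 1
  have hsD : √D ≠ 0 := (sqrt_pos.2 hD).ne'
  set b := 1 / (2 * ε ^ 2)
  set ω := √D / (2 * ε ^ 2)
  have hω : ω ≠ 0 := by positivity
  have hexp (s : ℝ) : HasDerivAt (fun s => exp (b * s)) (exp (b * s) * b) s :=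
    (hasDerivAt_exp (b * s)).comp s (((hasDerivAt_id s).const_mul b).congr_deriv (mul_one b))
  set u := fun s => exp (b * s) * f s
  set v := fun s => exp (b * s) * (b * f s + f' s)
  have hu (s : ℝ) : HasDerivAt u (v s) s :=
    ((hexp s).mul (hf s)).congr_deriv (by ring)
  have hv (s : ℝ) : HasDerivAt v (-(ω ^ 2) * u s) s := by
    refine ((hexp s).mul (((hf s).const_mul b).add (hf' s))).congr_deriv ?_
    have hω2 : ω ^ 2 = D / (4 * ε ^ 4) := by
      rw [div_pow, sq_sqrt hD.le]; ring
    have hf''s : f'' s = -(f' s + lam * f s) / ε ^ 2 := by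
      field_simp; linarith [hode s]
    simp only [u, hω2, b, hf''s, D, Pi.add_apply]
    field_simp
    ring
  have hsol := harmonic_oscillator_eq hω hu hv t
  have hf'0 : f' 0 = 1 / ε := by field_simp; linarith
  simp only [u, v, hf0, hf'0, mul_zero, exp_zero, zero_mul, zero_add, one_mul] at hsol
  have hcancel : b * t + -(t / (2 * ε ^ 2)) = 0 := by simp only [b]; ring
  rw [← mul_right_inj' (exp_pos (b * t)).ne', hsol, ← mul_assoc, ← mul_assoc, ← exp_add, hcancel,
    exp_zero]
  simp only [ω]
  field_simp

theorem one_add_mul_abs_sin_le {a x : ℝ} (ha : 0 ≤ a) (hx : 0 ≤ x) :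
    (1 + a) * |sin (2 * a * x)| ≤ 2 * a * exp x := by
  have hsmall : |sin (2 * a * x)| ≤ 2 * a * x :=
    abs_sin_le_abs.trans (abs_of_nonneg (by positivity)).le
  have hlarge : a * |sin (2 * a * x)| ≤ a := mul_le_of_le_one_right ha (abs_sin_le_one _)
  nlinarith [mul_le_mul_of_nonneg_left (add_one_le_exp x) ha]

theorem abs_underdamped_le {lam ε t : ℝ} (hlam : 0 < lam) (hε : 0 < ε)
    (hD : 0 < 4 * lam * ε ^ 2 - 1) (ht : 0 ≤ t) :
    |exp (-(t / (2 * ε ^ 2))) * (2 * ε / √(4 * lam * ε ^ 2 - 1)) *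
        sin (√(4 * lam * ε ^ 2 - 1) * t / (2 * ε ^ 2))| ≤
      2 * lam ^ (-(1 : ℝ) / 2) * exp (-(t / (4 * ε ^ 2))) := by
  set a := √(4 * lam * ε ^ 2 - 1)
  have ha : 0 < a := sqrt_pos.2 hD
  set x := t / (4 * ε ^ 2)
  have hx : 0 ≤ x := by positivity
  have harg : a * t / (2 * ε ^ 2) = 2 * a * x := by simp only [x]; field_simp; ring
  have hdecay : exp (-(t / (2 * ε ^ 2))) = exp (-x) * exp (-x) := by
    rw [← exp_add]; congr 1; simp only [x]; field_simp; ring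
  have hlam' : lam ^ (-(1 : ℝ) / 2) = (√lam)⁻¹ := by
    rw [sqrt_eq_rpow, ← rpow_neg hlam.le]; norm_num
  -- `(2 ε √lam)² = 1 + a²`
  have hsqrt : 2 * ε * √lam ≤ 1 + a := by
    nlinarith [sq_sqrt hlam.le, sq_sqrt hD.le, sqrt_nonneg lam]
  rw [harg, hdecay, hlam', abs_mul, abs_of_pos (by positivity)]
  have hcoef : 2 * ε / (1 + a) ≤ (√lam)⁻¹ := by
    rw [div_le_iff₀ (by positivity), ← div_eq_inv_mul, le_div_iff₀ (sqrt_pos.2 hlam)]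
    linarith
  calc exp (-x) * exp (-x) * (2 * ε / a) * |sin (2 * a * x)|
      = exp (-x) * exp (-x) * (2 * ε / (a * (1 + a))) * ((1 + a) * |sin (2 * a * x)|) := by
        field_simp
    _ ≤ exp (-x) * exp (-x) * (2 * ε / (a * (1 + a))) * (2 * a * exp x) :=
        mul_le_mul_of_nonneg_left (one_add_mul_abs_sin_le ha.le hx) (by positivity)
    _ = 2 * (2 * ε / (1 + a)) * exp (-x) := by
        rw [exp_neg]; field_simp
    _ ≤ 2 * (√lam)⁻¹ * exp (-x) := by gcongr

theorem stmt8 :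
    ∃ C : ℝ, 0 < C ∧ ∀ (lam ε : ℝ) (f f' f'' : ℝ → ℝ),
      0 < lam → 0 < ε → 1 - 4 * lam * ε ^ 2 < 0 →
      (∀ t, HasDerivAt f (f' t) t) → (∀ t, HasDerivAt f' (f'' t) t) →
      (∀ t, ε ^ 2 * f'' t + f' t + lam * f t = 0) →
      f 0 = 0 → ε * f' 0 = 1 →
      (∀ t, 0 ≤ t →
        f t = Real.exp (-(t / (2 * ε ^ 2))) * (2 * ε / Real.sqrt (4 * lam * ε ^ 2 - 1)) *
          Real.sin (Real.sqrt (4 * lam * ε ^ 2 - 1) * t / (2 * ε ^ 2)))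
      ∧ (∀ t, 0 ≤ t →
        |f t| ≤ C * lam ^ (-(1 : ℝ) / 2) * Real.exp (-(t / (4 * ε ^ 2)))) := by
  refine ⟨2, two_pos, fun lam ε f f' f'' hlam hε hunder hf hf' hode hf0 hf'0 => ?_⟩
  have hD : 0 < 4 * lam * ε ^ 2 - 1 := by linarith
  have hsol := underdamped_eq hε.ne' hD hf hf' hode hf0 hf'0
  exact ⟨fun t _ => hsol t, fun t ht => hsol t ▸ abs_underdamped_le hlam hε hD ht⟩
end

section
/- Fix λ > 0 and ε > 0 with 1 − 4λε² ≥ 0, and let f solve ε² f'' + f' + λ f = 0 with f(0) = 0 and ε f'(0) = 1. Then |f(t)| ≤ 4 ε e^{−λ t} for all t ≥ 0. -/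
/-!
`w = e^{λt} f` solves `α w'' + β w' + γ w = 0` with `α = ε²`, `β = 1 - 2λε² ≥ 1/2` and
`γ = ε²λ²`. For such an equation with `β, γ ≥ 0` both `α w'² + γ w²` and
`(α w' + β w)² + αγ w²` are nonincreasing; from `w(0) = 0` the first bounds `|w'|` by `|w'(0)|`,
the second bounds `|α w' + β w|` by `α |w'(0)|`, hence `β |w| ≤ 2α |w'(0)| = 2ε`.
-/

open Real

section DampedOscillator

variable {α β γ : ℝ} {y y' y'' : ℝ → ℝ}

theorem antitone_damped_energy (hβ : 0 ≤ β)
    (hy : ∀ t, HasDerivAt y (y' t) t) (hy' : ∀ t, HasDerivAt y' (y'' t) t)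
    (hode : ∀ t, α * y'' t + β * y' t + γ * y t = 0) :
    Antitone fun t => α * y' t ^ 2 + γ * y t ^ 2 := by
  refine antitone_of_hasDerivAt_nonpos (f' := fun t => -2 * β * y' t ^ 2)
    (fun t => ?_) fun t => by dsimp; nlinarith [sq_nonneg (y' t)]
  refine ((((hy' t).fun_pow 2).const_mul α).add (((hy t).fun_pow 2).const_mul γ)).congr_deriv ?_
  linear_combination (2 * y' t) * hode t

theorem antitone_damped_modifiedEnergy (hβ : 0 ≤ β) (hγ : 0 ≤ γ)
    (hy : ∀ t, HasDerivAt y (y' t) t) (hy' : ∀ t, HasDerivAt y' (y'' t) t)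
    (hode : ∀ t, α * y'' t + β * y' t + γ * y t = 0) :
    Antitone fun t => (α * y' t + β * y t) ^ 2 + α * γ * y t ^ 2 := by
  refine antitone_of_hasDerivAt_nonpos (f' := fun t => -2 * β * γ * y t ^ 2)
    (fun t => ?_) fun t => by dsimp; nlinarith [mul_nonneg hβ hγ, sq_nonneg (y t)]
  refine (((((hy' t).const_mul α).fun_add ((hy t).const_mul β)).fun_pow 2).add
    (((hy t).fun_pow 2).const_mul (α * γ))).congr_deriv ?_
  linear_combination (2 * (α * y' t + β * y t)) * hode t

theorem mul_abs_le_of_damped (hα : 0 < α) (hβ : 0 ≤ β) (hγ : 0 ≤ γ)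
    (hy : ∀ t, HasDerivAt y (y' t) t) (hy' : ∀ t, HasDerivAt y' (y'' t) t)
    (hode : ∀ t, α * y'' t + β * y' t + γ * y t = 0) (h0 : y 0 = 0) {t : ℝ} (ht : 0 ≤ t) :
    β * |y t| ≤ 2 * α * |y' 0| := by
  have hE := antitone_damped_energy hβ hy hy' hode ht
  have hH := antitone_damped_modifiedEnergy hβ hγ hy hy' hode ht
  norm_num only [h0] at hE hH
  have hγy : 0 ≤ γ * y t ^ 2 := by positivity
  have hy't : |y' t| ≤ |y' 0| := sq_le_sq.mp (by nlinarith)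
  have hsum : |α * y' t + β * y t| ≤ α * |y' 0| :=
    abs_le_of_sq_le_sq (by rw [mul_pow, sq_abs]; nlinarith [mul_nonneg hα.le hγy]) (by positivity)
  calc β * |y t| = |(α * y' t + β * y t) - α * y' t| := by
        rw [add_sub_cancel_left, abs_mul, abs_of_nonneg hβ]
    _ ≤ |α * y' t + β * y t| + |α * y' t| := abs_sub _ _
    _ = |α * y' t + β * y t| + α * |y' t| := by rw [abs_mul, abs_of_pos hα]
    _ ≤ α * |y' 0| + α * |y' 0| := by gcongr
    _ = 2 * α * |y' 0| := by ring

end DampedOscillator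

theorem hasDerivAt_exp_mul {f : ℝ → ℝ} {f' t : ℝ} (μ : ℝ) (hf : HasDerivAt f f' t) :
    HasDerivAt (fun s => exp (μ * s) * f s) (exp (μ * t) * (μ * f t + f')) t := by
  refine ((((hasDerivAt_id t).const_mul μ).exp).fun_mul hf).congr_deriv ?_
  simp only [id]
  ring

theorem stmt10_general (lam ε : ℝ) (hε : 0 < ε)
    (hreg : 0 ≤ 1 - 4 * lam * ε ^ 2)
    (f f' f'' : ℝ → ℝ)
    (hf : ∀ t, HasDerivAt f (f' t) t) (hf' : ∀ t, HasDerivAt f' (f'' t) t)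
    (hode : ∀ t, ε ^ 2 * f'' t + f' t + lam * f t = 0)
    (h0 : f 0 = 0) (h0' : ε * f' 0 = 1) :
    ∀ t, 0 ≤ t → |f t| ≤ 4 * ε * Real.exp (-(lam * t)) := by
  intro t ht
  have hw s := hasDerivAt_exp_mul lam (hf s)
  have hw' s := hasDerivAt_exp_mul lam (((hf s).const_mul lam).fun_add (hf' s))
  have hbound := mul_abs_le_of_damped (α := ε ^ 2) (β := 1 - 2 * lam * ε ^ 2)
    (γ := ε ^ 2 * lam ^ 2) (by positivity) (by linarith) (by positivity) hw hw'
    (fun s => by linear_combination exp (lam * s) * hode s) (by simp [h0]) ht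
  have hw'0 : ε ^ 2 * |exp (lam * 0) * (lam * f 0 + f' 0)| = ε := by
    rw [h0, mul_zero, exp_zero, one_mul, zero_add, ← abs_of_pos hε, ← abs_pow, ← abs_mul]
    congr 1
    linear_combination ε * h0'
  have hwt : |exp (lam * t) * f t| ≤ 4 * ε := by nlinarith [abs_nonneg (exp (lam * t) * f t)]
  rw [abs_mul, abs_of_pos (exp_pos _)] at hwt
  calc |f t| = exp (-(lam * t)) * (exp (lam * t) * |f t|) := by
        rw [← mul_assoc, ← exp_add, neg_add_cancel, exp_zero, one_mul]
    _ ≤ exp (-(lam * t)) * (4 * ε) := by gcongr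
    _ = 4 * ε * exp (-(lam * t)) := mul_comm _ _

theorem stmt10 (lam ε : ℝ) (hlam : 0 < lam) (hε : 0 < ε)
    (hreg : 0 ≤ 1 - 4 * lam * ε ^ 2)
    (f f' f'' : ℝ → ℝ)
    (hf : ∀ t, HasDerivAt f (f' t) t) (hf' : ∀ t, HasDerivAt f' (f'' t) t)
    (hode : ∀ t, ε ^ 2 * f'' t + f' t + lam * f t = 0)
    (h0 : f 0 = 0) (h0' : ε * f' 0 = 1) :
    ∀ t, 0 ≤ t → |f t| ≤ 4 * ε * Real.exp (-(lam * t)) :=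
  stmt10_general lam ε hε hreg f f' f'' hf hf' hode h0 h0'
end

section
/- Fix λ > 0 and ε > 0 with 1 − 4λε² ≥ 0, and let f solve ε² f'' + f' + λ f = 0 with f(0) = 1 and f'(0) = 0. Then |f(t)| ≤ √2 e^{−λ t} for all t ≥ 0. -/
/-!
With `w(t) = e^{λt} f(t)` the equation becomes the damped oscillator
`ε² w'' + (1 - 2ε²λ) w' + ε²λ² w = 0`, whose damping is nonnegative when `1 - 4λε² ≥ 0`.
Its energy `ε² w'² + ε²λ² w²` therefore decreases, so for `t ≥ 0` it is at most its initial
value `2ε²λ²`, giving `w(t)² ≤ 2`.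
-/

open Real

theorem antitone_energy_of_damped_oscillator {m c k : ℝ} (hc : 0 ≤ c) {w w' w'' : ℝ → ℝ}
    (hw : ∀ t, HasDerivAt w (w' t) t) (hw' : ∀ t, HasDerivAt w' (w'' t) t)
    (hode : ∀ t, m * w'' t + c * w' t + k * w t = 0) :
    Antitone fun t => m * w' t ^ 2 + k * w t ^ 2 := by
  refine antitone_of_hasDerivAt_nonpos (f' := fun t => -2 * c * w' t ^ 2)
    (fun t => ?_) fun t => by
      simpa using mul_nonneg (mul_nonneg zero_le_two hc) (sq_nonneg (w' t))
  refine ((((hw' t).pow 2).const_mul m).add (((hw t).pow 2).const_mul k)).congr_deriv ?_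
  linear_combination 2 * w' t * hode t

theorem hasDerivAt_exp_mul_mul (lam : ℝ) {g : ℝ → ℝ} {g' t : ℝ} (hg : HasDerivAt g g' t) :
    HasDerivAt (fun s => exp (lam * s) * g s) (exp (lam * t) * (g' + lam * g t)) t := by
  have hexp : HasDerivAt (fun s => exp (lam * s)) (exp (lam * t) * lam) t :=
    ((hasDerivAt_id t).const_mul lam).exp.congr_deriv (by simp)
  exact (hexp.mul hg).congr_deriv (by ring)

theorem stmt11 (lam ε : ℝ) (hlam : 0 < lam) (hε : 0 < ε)
    (hreg : 0 ≤ 1 - 4 * lam * ε ^ 2)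
    (f f' f'' : ℝ → ℝ)
    (hf : ∀ t, HasDerivAt f (f' t) t) (hf' : ∀ t, HasDerivAt f' (f'' t) t)
    (hode : ∀ t, ε ^ 2 * f'' t + f' t + lam * f t = 0)
    (h0 : f 0 = 1) (h0' : f' 0 = 0) :
    ∀ t, 0 ≤ t → |f t| ≤ Real.sqrt 2 * Real.exp (-(lam * t)) := by
  intro t ht
  set w := fun s => exp (lam * s) * f s
  set w' := fun s => exp (lam * s) * (f' s + lam * f s)
  have hw : ∀ s, HasDerivAt w (w' s) s := fun s => hasDerivAt_exp_mul_mul lam (hf s)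
  have hw' : ∀ s, HasDerivAt w'
      (exp (lam * s) * (f'' s + lam * f' s + lam * (f' s + lam * f s))) s :=
    fun s => hasDerivAt_exp_mul_mul lam ((hf' s).add ((hf s).const_mul lam))
  have hdamped := antitone_energy_of_damped_oscillator (m := ε ^ 2) (c := 1 - 2 * ε ^ 2 * lam)
    (k := ε ^ 2 * lam ^ 2) (by nlinarith) hw hw' fun s => by
      linear_combination exp (lam * s) * hode s
  have henergy := hdamped ht
  simp only [w, w', mul_zero, exp_zero, h0, h0'] at henergy
  have hwt : w t ^ 2 ≤ 2 := by
    have hscale : 0 < ε ^ 2 * lam ^ 2 := by positivity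
    nlinarith [sq_nonneg (ε * w' t)]
  calc |f t| = |w t| * exp (-(lam * t)) := by
        simp only [w, abs_mul, abs_of_pos (exp_pos _), mul_comm, mul_assoc, ← exp_add,
          add_neg_cancel, exp_zero, mul_one]
    _ ≤ √2 * exp (-(lam * t)) := by gcongr; exact abs_le_sqrt hwt
end

section
/- Fix λ > 0 and ε > 0 with 1 − 4λε² ≥ 0, and let (f,g) solve f' = g/ε, g' = −λ f/ε − g/ε² with f(0) = 0, g(0) = 1. Then for all t ≥ 0, g(t) = e^{−t/ε²} − ∫₀ᵗ (λ/ε) e^{−(t−s)/ε²} f(s) ds, and there is a universal constant C such that |g(t)| ≤ e^{−t/ε²} + C λ ε² e^{−λ t}. -/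
open Real intervalIntegral MeasureTheory

/-!
Duhamel's formula is variation of constants for `g' = -g/ε² - λf/ε`. For the bound, the energy
`E = (f² + 2εfg + 2ε²g²) e^{2λt}` satisfies `E' = -2(1 - 2λε²) g² e^{2λt} ≤ 0` and
`2E - f² e^{2λt} = (f + 2εg)² e^{2λt} ≥ 0`; since `E(0) = 2ε²`, this gives `|f(s)| ≤ 2ε e^{-λs}`.
Inserting this into the Duhamel integral leaves
`2λ ∫₀ᵗ e^{-(t-s)/ε²} e^{-λs} ds ≤ 2λε² e^{-λt} / (1 - λε²) ≤ (8/3) λε² e^{-λt}`, as `λε² ≤ 1/4`.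
-/

theorem eq_exp_mul_add_integral_of_hasDerivAt {g h : ℝ → ℝ} {c : ℝ} (hh : Continuous h)
    (hg : ∀ t, HasDerivAt g (h t - c * g t) t) (t : ℝ) :
    g t = exp (-(c * t)) * g 0 + ∫ s in (0 : ℝ)..t, exp (-(c * (t - s))) * h s := by
  have hderiv : ∀ s, HasDerivAt (fun s => exp (c * s) * g s) (exp (c * s) * h s) s := fun s => by
    refine (((hasDerivAt_id s).const_mul c).exp.mul (hg s)).congr_deriv ?_
    simp only [id, mul_one]
    ring
  have hftc := integral_eq_sub_of_hasDerivAt (fun s _ => hderiv s)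
    ((continuous_const.mul continuous_id).rexp.mul hh |>.intervalIntegrable 0 t)
  have hsplit : ∀ s, exp (-(c * (t - s))) * h s = exp (-(c * t)) * (exp (c * s) * h s) := by
    intro s
    rw [← mul_assoc, ← exp_add]
    ring_nf
  rw [integral_congr fun s _ => hsplit s, intervalIntegral.integral_const_mul, hftc, mul_sub,
    ← mul_assoc, ← exp_add]
  simp

theorem integral_exp_mul_exp {a b : ℝ} (hab : a ≠ b) (t : ℝ) :
    ∫ s in (0 : ℝ)..t, exp (-(a * (t - s))) * exp (-(b * s))
      = (exp (-(b * t)) - exp (-(a * t))) / (a - b) := by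
  have hab' : a - b ≠ 0 := sub_ne_zero.2 hab
  have hderiv : ∀ s, HasDerivAt (fun s => exp (-(a * t) + (a - b) * s) / (a - b))
      (exp (-(a * (t - s))) * exp (-(b * s))) s := fun s => by
    refine ((((hasDerivAt_id s).const_mul (a - b)).const_add (-(a * t))).exp.div_const
      (a - b)).congr_deriv ?_
    rw [← exp_add, id]
    field_simp
    ring_nf
  rw [integral_eq_sub_of_hasDerivAt (fun s _ => hderiv s)
    ((continuous_const.mul (continuous_const.sub continuous_id)).neg.rexp.mul
      (continuous_const.mul continuous_id).neg.rexp |>.intervalIntegrable 0 t)]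
  ring_nf

section DampedSystem

variable {lam ε : ℝ} {f g : ℝ → ℝ}

noncomputable def dampedEnergy (lam ε : ℝ) (f g : ℝ → ℝ) (t : ℝ) : ℝ :=
  (f t ^ 2 + 2 * ε * f t * g t + 2 * ε ^ 2 * g t ^ 2) * exp (2 * lam * t)

theorem hasDerivAt_dampedEnergy (hε : ε ≠ 0) (hf : ∀ t, HasDerivAt f (g t / ε) t)
    (hg : ∀ t, HasDerivAt g (-(lam * f t) / ε - g t / ε ^ 2) t) (t : ℝ) :
    HasDerivAt (dampedEnergy lam ε f g)
      (-(2 * (1 - 2 * lam * ε ^ 2) * g t ^ 2 * exp (2 * lam * t))) t := by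
  have hquad := (((hf t).pow 2).add (((hf t).const_mul (2 * ε)).mul (hg t))).add
    ((hg t).pow 2 |>.const_mul (2 * ε ^ 2))
  refine (hquad.mul ((hasDerivAt_id t).const_mul (2 * lam)).exp).congr_deriv ?_
  simp only [id, Pi.add_apply, Pi.mul_apply, Pi.pow_apply]
  field_simp
  ring

theorem dampedEnergy_antitone (hε : ε ≠ 0) (hdamp : 2 * lam * ε ^ 2 ≤ 1)
    (hf : ∀ t, HasDerivAt f (g t / ε) t)
    (hg : ∀ t, HasDerivAt g (-(lam * f t) / ε - g t / ε ^ 2) t) :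
    Antitone (dampedEnergy lam ε f g) := by
  refine antitone_of_hasDerivAt_nonpos (hasDerivAt_dampedEnergy hε hf hg) fun t => ?_
  have hcoef : 0 ≤ 2 * (1 - 2 * lam * ε ^ 2) := by linarith
  exact neg_nonpos.2 <| mul_nonneg (mul_nonneg hcoef (sq_nonneg _)) (exp_pos _).le

theorem sq_mul_exp_le_two_mul_dampedEnergy (t : ℝ) :
    f t ^ 2 * exp (2 * lam * t) ≤ 2 * dampedEnergy lam ε f g t := by
  have hquad : f t ^ 2 ≤ 2 * (f t ^ 2 + 2 * ε * f t * g t + 2 * ε ^ 2 * g t ^ 2) := by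
    nlinarith [sq_nonneg (f t + 2 * ε * g t)]
  unfold dampedEnergy
  nlinarith [exp_pos (2 * lam * t)]

theorem abs_le_two_mul_exp_of_damped (hε : 0 < ε) (hdamp : 2 * lam * ε ^ 2 ≤ 1)
    (hf : ∀ t, HasDerivAt f (g t / ε) t)
    (hg : ∀ t, HasDerivAt g (-(lam * f t) / ε - g t / ε ^ 2) t) (hf0 : f 0 = 0) (hg0 : g 0 = 1)
    {s : ℝ} (hs : 0 ≤ s) :
    |f s| ≤ 2 * ε * exp (-(lam * s)) := by
  have henergy : f s ^ 2 * exp (2 * lam * s) ≤ 4 * ε ^ 2 :=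
    calc f s ^ 2 * exp (2 * lam * s) ≤ 2 * dampedEnergy lam ε f g s :=
          sq_mul_exp_le_two_mul_dampedEnergy s
      _ ≤ 2 * dampedEnergy lam ε f g 0 := by
          gcongr
          exact dampedEnergy_antitone hε.ne' hdamp hf hg hs
      _ = 4 * ε ^ 2 := by simp [dampedEnergy, hf0, hg0]; ring
  have hexp : exp (2 * lam * s) * exp (-(lam * s)) ^ 2 = 1 := by
    rw [sq, ← exp_add, ← exp_add]
    ring_nf
    exact exp_zero
  refine abs_le_of_sq_le_sq ?_ (by positivity)
  calc f s ^ 2 = f s ^ 2 * exp (2 * lam * s) * exp (-(lam * s)) ^ 2 := by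
        rw [mul_assoc, hexp, mul_one]
    _ ≤ 4 * ε ^ 2 * exp (-(lam * s)) ^ 2 := by gcongr
    _ = (2 * ε * exp (-(lam * s))) ^ 2 := by ring

theorem damped_duhamel (hf : ∀ t, HasDerivAt f (g t / ε) t)
    (hg : ∀ t, HasDerivAt g (-(lam * f t) / ε - g t / ε ^ 2) t) (hg0 : g 0 = 1) (t : ℝ) :
    g t = exp (-(t / ε ^ 2)) - ∫ s in (0 : ℝ)..t, (lam / ε) * exp (-((t - s) / ε ^ 2)) * f s := by
  have hfc : Continuous f := Differentiable.continuous fun t => (hf t).differentiableAt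
  rw [eq_exp_mul_add_integral_of_hasDerivAt (c := (ε ^ 2)⁻¹) (h := fun s => -(lam * f s) / ε)
    (by fun_prop) (fun t => (hg t).congr_deriv (by ring)) t, hg0, mul_one, sub_eq_add_neg,
    ← intervalIntegral.integral_neg]
  congr 1
  · ring_nf
  · congr 1
    ext s
    ring_nf

theorem abs_integral_damped_le (hlam : 0 < lam) (hε : 0 < ε) (hdamp : 4 * lam * ε ^ 2 ≤ 1)
    (hfbound : ∀ s, 0 ≤ s → |f s| ≤ 2 * ε * exp (-(lam * s))) {t : ℝ} (ht : 0 ≤ t) :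
    |∫ s in (0 : ℝ)..t, (lam / ε) * exp (-((t - s) / ε ^ 2)) * f s|
      ≤ 8 / 3 * lam * ε ^ 2 * exp (-(lam * t)) := by
  have hgap : 0 < (ε ^ 2)⁻¹ - lam := by
    field_simp
    nlinarith [mul_pos hlam (pow_pos hε 2)]
  calc |∫ s in (0 : ℝ)..t, (lam / ε) * exp (-((t - s) / ε ^ 2)) * f s|
      ≤ ∫ s in (0 : ℝ)..t, 2 * lam * (exp (-((ε ^ 2)⁻¹ * (t - s))) * exp (-(lam * s))) := by
        rw [← Real.norm_eq_abs]
        refine norm_integral_le_of_norm_le ht (ae_of_all _ fun s hs => ?_)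
          (Continuous.intervalIntegrable (by fun_prop) _ _)
        rw [Real.norm_eq_abs, abs_mul, abs_of_pos (by positivity), ← inv_mul_eq_div (ε ^ 2)]
        calc lam / ε * exp (-((ε ^ 2)⁻¹ * (t - s))) * |f s|
            ≤ lam / ε * exp (-((ε ^ 2)⁻¹ * (t - s))) * (2 * ε * exp (-(lam * s))) := by
              gcongr
              exact hfbound s hs.1.le
          _ = _ := by field_simp
    _ = 2 * lam * ((exp (-(lam * t)) - exp (-((ε ^ 2)⁻¹ * t))) / ((ε ^ 2)⁻¹ - lam)) := by
        rw [intervalIntegral.integral_const_mul, integral_exp_mul_exp (sub_pos.1 hgap).ne' t]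
    _ ≤ 2 * lam * (exp (-(lam * t)) / ((ε ^ 2)⁻¹ - lam)) := by
        gcongr
        exact sub_le_self _ (exp_pos _).le
    _ ≤ 8 / 3 * lam * ε ^ 2 * exp (-(lam * t)) := by
        rw [← mul_div_assoc, div_le_iff₀ hgap]
        have hexp := exp_pos (-(lam * t))
        field_simp
        nlinarith [mul_pos hlam hexp]

end DampedSystem

theorem stmt12 :
    ∃ C : ℝ, 0 < C ∧ ∀ (lam ε : ℝ) (f g : ℝ → ℝ),
      0 < lam → 0 < ε → 0 ≤ 1 - 4 * lam * ε ^ 2 →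
      (∀ t, HasDerivAt f (g t / ε) t) →
      (∀ t, HasDerivAt g (-(lam * f t) / ε - g t / ε ^ 2) t) →
      f 0 = 0 → g 0 = 1 →
      ∀ t, 0 ≤ t →
        (g t = Real.exp (-(t / ε ^ 2)) -
            ∫ s in (0 : ℝ)..t, (lam / ε) * Real.exp (-((t - s) / ε ^ 2)) * f s)
        ∧ |g t| ≤ Real.exp (-(t / ε ^ 2)) + C * lam * ε ^ 2 * Real.exp (-(lam * t)) := by
  refine ⟨8 / 3, by norm_num, fun lam ε f g hlam hε hdamp hf hg hf0 hg0 t ht => ?_⟩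
  have hduhamel := damped_duhamel hf hg hg0 t
  have hfbound : ∀ s, 0 ≤ s → |f s| ≤ 2 * ε * exp (-(lam * s)) := fun s hs =>
    abs_le_two_mul_exp_of_damped hε (by nlinarith [mul_pos hlam (pow_pos hε 2)]) hf hg hf0 hg0 hs
  refine ⟨hduhamel, ?_⟩
  calc |g t| ≤ |exp (-(t / ε ^ 2))|
        + |∫ s in (0 : ℝ)..t, (lam / ε) * exp (-((t - s) / ε ^ 2)) * f s| :=
        hduhamel ▸ abs_sub _ _
    _ ≤ _ := by
        rw [abs_of_pos (exp_pos _)]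
        gcongr
        exact abs_integral_damped_le hlam hε (by linarith) hfbound ht
end

section
/- For all α ∈ [0,1] and δ ∈ [0, α/2], there exists C ∈ (0,∞) such that: for all λ > 0, ε ∈ (0,1), t > 0, if f solves ε² f'' + f' + λ f = 0 with f(0) = 1, f'(0) = 0, then λ^{δ − α/2} |f(t) − e^{−λ t}| ≤ C t^{−δ} ε^{α}. -/
/-!
Compare `4 λ ε²` with `1`. If `4 λ ε² ≥ 1`, the functional `E = ε² f'² + λ f² + f f' / 2`
dominates `λ f² / 2` and satisfies `4 ε² E' ≤ -E`, so `f(t)² ≤ 2 e^{-t/(4ε²)}`; as also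
`λ ≥ 1/(4ε²)`, both `f(t)` and `e^{-λt}` are small once `t ≫ ε²`, and `λ^{δ-α/2} ≤ (8ε²)^{α/2-δ}`
together with `e^{-x} ≤ x^{-δ}` turns this into `ε^α t^{-δ}`.
If `4 λ ε² ≤ 1`, then `u = e^{λt} f` solves `ε² u'' + (1 - 2λε²) u' + λ² ε² u = 0`, whose energy
`ε² u'² + λ² ε² u²` dissipates at rate `2 (1 - 2λε²) u'² ≥ u'²`. Hence `∫₀ᵗ u'² ≤ 2 λ² ε²`, and
Cauchy–Schwarz gives `|u(t) - 1| ≤ √2 λ ε √t`; the factor `(λt)^{1/2+δ} e^{-λt} ≤ 1` absorbs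
the remaining powers of `λ` and `t`.
-/

open Real

structure SolvesLinearODE2 (a b c : ℝ) (u u' u'' : ℝ → ℝ) : Prop where
  hasDerivAt : ∀ s, HasDerivAt u (u' s) s
  hasDerivAt_deriv : ∀ s, HasDerivAt u' (u'' s) s
  eq_zero : ∀ s, a * u'' s + b * u' s + c * u s = 0

lemma rpow_mul_exp_neg_le_one {x p : ℝ} (hx : 0 < x) (hp0 : 0 ≤ p) (hp1 : p ≤ 1) :
    x ^ p * exp (-x) ≤ 1 := by
  have hxp : x ^ p ≤ 1 + x := by
    rcases le_total x 1 with h | h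
    · linarith [rpow_le_one hx.le h hp0]
    · linarith [rpow_le_self_of_one_le h hp1]
  calc x ^ p * exp (-x) ≤ (1 + x) * exp (-x) := by gcongr
    _ ≤ 1 := by
      rw [exp_neg, ← div_eq_mul_inv, div_le_one (exp_pos x)]
      linarith [add_one_le_exp x]

lemma exp_neg_le_rpow_neg {x p : ℝ} (hx : 0 < x) (hp0 : 0 ≤ p) (hp1 : p ≤ 1) :
    exp (-x) ≤ x ^ (-p) := by
  rw [rpow_neg hx.le, ← one_div, le_div_iff₀ (rpow_pos_of_pos hx p), mul_comm]
  exact rpow_mul_exp_neg_le_one hx hp0 hp1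

lemma le_mul_exp_neg_of_hasDerivAt {g g' : ℝ → ℝ} {k t : ℝ} (hg : ∀ s, HasDerivAt g (g' s) s)
    (hbound : ∀ s, g' s ≤ -(k * g s)) (ht : 0 ≤ t) : g t ≤ g 0 * exp (-(k * t)) := by
  have hanti : Antitone fun s => g s * exp (k * s) := by
    refine antitone_of_hasDerivAt_nonpos (f' := fun s => (g' s + k * g s) * exp (k * s))
      (fun s => ?_) fun s =>
      mul_nonpos_of_nonpos_of_nonneg (by linarith [hbound s]) (exp_pos (k * s)).le
    refine ((hg s).mul ((hasDerivAt_id' s).const_mul k).exp).congr_deriv ?_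
    ring
  have := hanti ht
  simp only [mul_zero, exp_zero, mul_one] at this
  rwa [exp_neg, ← div_eq_mul_inv, le_div_iff₀ (exp_pos _)]

lemma abs_intervalIntegral_le_sqrt_mul {g : ℝ → ℝ} {t B : ℝ} (hg : Continuous g) (ht : 0 < t)
    (hB : 0 < B) (hgB : ∫ s in 0..t, g s ^ 2 ≤ B) : |∫ s in 0..t, g s| ≤ √(t * B) := by
  set c := √B / √t with hc_def
  have hc : 0 < c := by positivity
  have hamgm : ∀ s, |g s| ≤ (g s ^ 2 / c + c) / 2 := fun s => by
    rw [div_add' _ _ _ hc.ne', div_div, le_div_iff₀ (by positivity), ← sq_abs]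
    nlinarith [sq_nonneg (|g s| - c)]
  have hint : ∫ s in 0..t, (g s ^ 2 / c + c) / 2 = ((∫ s in 0..t, g s ^ 2) / c + c * t) / 2 := by
    rw [intervalIntegral.integral_div, intervalIntegral.integral_add
      (f := fun s => g s ^ 2 / c) (((hg.pow 2).div_const c).intervalIntegrable _ _)
      intervalIntegrable_const,
      intervalIntegral.integral_div]
    simp [mul_comm]
  calc |∫ s in 0..t, g s| ≤ ∫ s in 0..t, |g s| :=
        intervalIntegral.abs_integral_le_integral_abs ht.le
    _ ≤ ∫ s in 0..t, (g s ^ 2 / c + c) / 2 := by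
      refine intervalIntegral.integral_mono_on ht.le (hg.abs.intervalIntegrable _ _) ?_
        fun s _ => hamgm s
      exact (((hg.pow 2).div_const c).add continuous_const).div_const 2 |>.intervalIntegrable _ _
    _ ≤ (B / c + c * t) / 2 := by rw [hint]; gcongr
    _ = √(t * B) := by
      rw [hc_def, sqrt_mul ht.le]
      field_simp
      rw [sq_sqrt ht.le, sq_sqrt hB.le]
      ring

namespace SolvesLinearODE2

variable {a b c : ℝ} {u u' u'' : ℝ → ℝ}

lemma continuous_deriv (h : SolvesLinearODE2 a b c u u' u'') : Continuous u' :=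
  continuous_iff_continuousAt.2 fun s => (h.hasDerivAt_deriv s).continuousAt

lemma two_mul_integral_deriv_sq_le (h : SolvesLinearODE2 a b c u u' u'') (ha : 0 ≤ a)
    (hc : 0 ≤ c) (t : ℝ) : 2 * b * ∫ s in 0..t, u' s ^ 2 ≤ a * u' 0 ^ 2 + c * u 0 ^ 2 := by
  have hQ : ∀ s, HasDerivAt (fun s => a * u' s ^ 2 + c * u s ^ 2) (-(2 * b * u' s ^ 2)) s :=
    fun s => ((((h.hasDerivAt_deriv s).pow 2).const_mul a).add
      (((h.hasDerivAt s).pow 2).const_mul c)).congr_deriv (by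
        simp only [Nat.cast_ofNat]; linear_combination 2 * u' s * h.eq_zero s)
  have hftc := intervalIntegral.integral_eq_sub_of_hasDerivAt (fun s _ => hQ s)
    ((continuous_const.mul (h.continuous_deriv.pow 2)).neg.intervalIntegrable 0 t)
  rw [intervalIntegral.integral_neg, intervalIntegral.integral_const_mul] at hftc
  nlinarith [mul_nonneg ha (sq_nonneg (u' t)), mul_nonneg hc (sq_nonneg (u t))]

lemma exp_mul (h : SolvesLinearODE2 a b c u u' u'') (k : ℝ) :
    SolvesLinearODE2 a (b - 2 * a * k) (a * k ^ 2 - b * k + c) (fun s => exp (k * s) * u s)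
      (fun s => exp (k * s) * (u' s + k * u s))
      (fun s => exp (k * s) * (u'' s + 2 * k * u' s + k ^ 2 * u s)) where
  hasDerivAt s := ((((hasDerivAt_id' s).const_mul k).exp).mul (h.hasDerivAt s)).congr_deriv
    (by ring)
  hasDerivAt_deriv s := ((((hasDerivAt_id' s).const_mul k).exp).mul
    ((h.hasDerivAt_deriv s).add ((h.hasDerivAt s).const_mul k))).congr_deriv
    (by simp only [Pi.add_apply]; ring)
  eq_zero s := by linear_combination exp (k * s) * h.eq_zero s

end SolvesLinearODE2

section

variable {ε lam t : ℝ} {f f' f'' : ℝ → ℝ}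

lemma sq_le_two_mul_exp_neg_of_one_le (h : SolvesLinearODE2 (ε ^ 2) 1 lam f f' f'')
    (hε : 0 < ε) (hreg : 1 ≤ 4 * lam * ε ^ 2) (hf0 : f 0 = 1) (hf'0 : f' 0 = 0) (ht : 0 ≤ t) :
    f t ^ 2 ≤ 2 * exp (-(t / (4 * ε ^ 2))) := by
  have hlam : 0 < lam := by nlinarith [sq_nonneg ε]
  set E := fun s => ε ^ 2 * f' s ^ 2 + lam * f s ^ 2 + f s * f' s / 2
  set E' := fun s =>
    2 * ε ^ 2 * f' s * f'' s + 2 * lam * f s * f' s + (f' s ^ 2 + f s * f'' s) / 2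
  have hE : ∀ s, HasDerivAt E (E' s) s := fun s => by
    refine (((((h.hasDerivAt_deriv s).pow 2).const_mul (ε ^ 2)).add
      (((h.hasDerivAt s).pow 2).const_mul lam)).add
      (((h.hasDerivAt s).mul (h.hasDerivAt_deriv s)).div_const 2)).congr_deriv ?_
    simp only [E']
    ring
  have hdecay : ∀ s, E' s ≤ -(1 / (4 * ε ^ 2) * E s) := by
    intro s
    have hrelax : 4 * ε ^ 2 * E' s + E s =
        -(5 * ε ^ 2 * f' s ^ 2 + lam * f s ^ 2 + 3 / 2 * f s * f' s) := by
      simp only [E, E']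
      linear_combination (8 * ε ^ 2 * f' s + 2 * f s) * h.eq_zero s
    have hpos : 0 ≤ 5 * ε ^ 2 * f' s ^ 2 + lam * f s ^ 2 + 3 / 2 * f s * f' s := by
      nlinarith [sq_nonneg (f s + 3 * ε ^ 2 * f' s), sq_nonneg (ε ^ 2 * f' s),
        sq_nonneg (ε * f' s), mul_nonneg (sub_nonneg.2 hreg) (sq_nonneg (f s))]
    rw [one_div_mul_eq_div, le_neg, div_le_iff₀ (by positivity)]
    linarith
  have hlower : lam / 2 * f t ^ 2 ≤ E t := by
    simp only [E]
    nlinarith [sq_nonneg (2 * ε ^ 2 * f' t + f t), sq_nonneg (ε * f' t),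
      mul_nonneg (sub_nonneg.2 hreg) (sq_nonneg (f t)), sq_nonneg (ε ^ 2 * f' t)]
  have hEt := le_mul_exp_neg_of_hasDerivAt hE hdecay ht
  rw [show E 0 = lam by simp [E, hf0, hf'0], one_div_mul_eq_div] at hEt
  nlinarith [hlower.trans hEt]

lemma abs_sub_exp_le_of_one_le (h : SolvesLinearODE2 (ε ^ 2) 1 lam f f' f'')
    (hε : 0 < ε) (hreg : 1 ≤ 4 * lam * ε ^ 2) (hf0 : f 0 = 1) (hf'0 : f' 0 = 0) (ht : 0 ≤ t) :
    |f t - exp (-(lam * t))| ≤ 3 * exp (-(t / (8 * ε ^ 2))) := by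
  have hexp_sq : exp (-(t / (8 * ε ^ 2))) ^ 2 = exp (-(t / (4 * ε ^ 2))) := by
    rw [← exp_nat_mul]
    congr 1
    field_simp
    ring
  have hf : |f t| ≤ 2 * exp (-(t / (8 * ε ^ 2))) := by
    refine abs_le_of_sq_le_sq ?_ (by positivity)
    rw [mul_pow, hexp_sq]
    linarith [sq_le_two_mul_exp_neg_of_one_le h hε hreg hf0 hf'0 ht,
      exp_pos (-(t / (4 * ε ^ 2)))]
  have hexp : exp (-(lam * t)) ≤ exp (-(t / (8 * ε ^ 2))) := by
    rw [exp_le_exp, neg_le_neg_iff, div_le_iff₀ (by positivity)]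
    nlinarith [mul_nonneg ht (sq_nonneg ε)]
  calc |f t - exp (-(lam * t))| ≤ |f t| + exp (-(lam * t)) := by
        simpa [abs_of_pos (exp_pos _)] using abs_sub (f t) (exp (-(lam * t)))
    _ ≤ 3 * exp (-(t / (8 * ε ^ 2))) := by linarith

lemma abs_sub_exp_le_of_le_one (h : SolvesLinearODE2 (ε ^ 2) 1 lam f f' f'')
    (hε : 0 < ε) (hlam : 0 < lam) (hreg : 4 * lam * ε ^ 2 ≤ 1) (hf0 : f 0 = 1)
    (hf'0 : f' 0 = 0) (ht : 0 < t) :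
    |f t - exp (-(lam * t))| ≤ √2 * lam * ε * √t * exp (-(lam * t)) := by
  have hu := h.exp_mul lam
  have henergy := hu.two_mul_integral_deriv_sq_le (sq_nonneg ε) (by nlinarith [sq_nonneg ε]) t
  simp only [mul_zero, exp_zero, one_mul, hf0, hf'0] at henergy
  have hint : ∫ s in 0..t, (exp (lam * s) * (f' s + lam * f s)) ^ 2 ≤ 2 * lam ^ 2 * ε ^ 2 := by
    nlinarith [intervalIntegral.integral_nonneg (μ := MeasureTheory.volume) ht.le fun s _ =>
      sq_nonneg (exp (lam * s) * (f' s + lam * f s))]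
  have hftc := intervalIntegral.integral_eq_sub_of_hasDerivAt (fun s _ => hu.hasDerivAt s)
    (hu.continuous_deriv.intervalIntegrable 0 t)
  have hcs := abs_intervalIntegral_le_sqrt_mul hu.continuous_deriv ht (by positivity) hint
  simp only [hftc, mul_zero, exp_zero, one_mul, hf0] at hcs
  have hfactor : f t - exp (-(lam * t)) = exp (-(lam * t)) * (exp (lam * t) * f t - 1) := by
    rw [mul_sub, ← mul_assoc, ← exp_add, neg_add_cancel, exp_zero]
    ring
  have hsqrt : √(t * (2 * lam ^ 2 * ε ^ 2)) = √2 * lam * ε * √t := by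
    rw [show t * (2 * lam ^ 2 * ε ^ 2) = 2 * (lam * ε) ^ 2 * t by ring, sqrt_mul (by positivity),
      sqrt_mul (by positivity), sqrt_sq (by positivity)]
    ring
  rw [hfactor, abs_mul, abs_of_pos (exp_pos _), mul_comm, ← hsqrt]
  exact mul_le_mul_of_nonneg_right hcs (exp_pos _).le

end

section

variable {ε lam t α δ : ℝ} {f f' f'' : ℝ → ℝ}

lemma rpow_mul_abs_sub_exp_le_of_one_le (h : SolvesLinearODE2 (ε ^ 2) 1 lam f f' f'')
    (hε : 0 < ε) (hreg : 1 ≤ 4 * lam * ε ^ 2) (hf0 : f 0 = 1) (hf'0 : f' 0 = 0) (ht : 0 < t)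
    (hα : α ≤ 2) (hδ : δ ∈ Set.Icc 0 (α / 2)) :
    lam ^ (δ - α / 2) * |f t - exp (-(lam * t))| ≤ 24 * t ^ (-δ) * ε ^ α := by
  obtain ⟨hδ0, hδα⟩ := hδ
  have hr : 0 < 8 * ε ^ 2 := by positivity
  have hlam : lam ^ (δ - α / 2) ≤ (8 * ε ^ 2) ^ (α / 2 - δ) := by
    have hinv : (8 * ε ^ 2)⁻¹ ≤ lam := by
      rw [inv_le_iff_one_le_mul₀ hr]
      nlinarith [sq_nonneg ε]
    calc lam ^ (δ - α / 2) ≤ (8 * ε ^ 2)⁻¹ ^ (δ - α / 2) :=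
          rpow_le_rpow_of_nonpos (by positivity) hinv (by linarith)
      _ = (8 * ε ^ 2) ^ (α / 2 - δ) := by
          rw [inv_rpow hr.le, ← rpow_neg hr.le, neg_sub]
  have hexp : exp (-(t / (8 * ε ^ 2))) ≤ (8 * ε ^ 2) ^ δ * t ^ (-δ) := by
    calc exp (-(t / (8 * ε ^ 2))) ≤ (t / (8 * ε ^ 2)) ^ (-δ) :=
          exp_neg_le_rpow_neg (by positivity) hδ0 (by linarith)
      _ = (8 * ε ^ 2) ^ δ * t ^ (-δ) := by
          rw [div_rpow ht.le hr.le, rpow_neg hr.le, div_inv_eq_mul, mul_comm]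
  have hpow : (8 * ε ^ 2) ^ (α / 2) = 8 ^ (α / 2) * ε ^ α := by
    rw [mul_rpow (by norm_num) (by positivity), ← rpow_natCast_mul hε.le, Nat.cast_ofNat,
      mul_div_cancel₀ α two_ne_zero]
  calc lam ^ (δ - α / 2) * |f t - exp (-(lam * t))|
      ≤ (8 * ε ^ 2) ^ (α / 2 - δ) * (3 * exp (-(t / (8 * ε ^ 2)))) :=
        mul_le_mul hlam (abs_sub_exp_le_of_one_le h hε hreg hf0 hf'0 ht.le) (abs_nonneg _)
          (by positivity)
    _ ≤ (8 * ε ^ 2) ^ (α / 2 - δ) * (3 * ((8 * ε ^ 2) ^ δ * t ^ (-δ))) := by gcongr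
    _ = 3 * ((8 * ε ^ 2) ^ (α / 2 - δ) * (8 * ε ^ 2) ^ δ) * t ^ (-δ) := by ring
    _ = 3 * 8 ^ (α / 2) * ε ^ α * t ^ (-δ) := by
        rw [← rpow_add hr, sub_add_cancel, hpow]
        ring
    _ ≤ 3 * 8 * ε ^ α * t ^ (-δ) := by
        gcongr
        exact rpow_le_self_of_one_le (by norm_num) (by linarith)
    _ = 24 * t ^ (-δ) * ε ^ α := by ring

lemma rpow_mul_abs_sub_exp_le_of_le_one (h : SolvesLinearODE2 (ε ^ 2) 1 lam f f' f'')
    (hε : 0 < ε) (hlam : 0 < lam) (hreg : 4 * lam * ε ^ 2 ≤ 1) (hf0 : f 0 = 1)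
    (hf'0 : f' 0 = 0) (ht : 0 < t) (hα : α ≤ 1) (hδ : δ ∈ Set.Icc 0 (α / 2)) :
    lam ^ (δ - α / 2) * |f t - exp (-(lam * t))| ≤ 2 * t ^ (-δ) * ε ^ α := by
  obtain ⟨hδ0, hδα⟩ := hδ
  have hlam_pow : lam ^ (δ - α / 2) * lam = lam ^ ((1 - α) / 2) * lam ^ (1 / 2 + δ) := by
    rw [← rpow_add_one hlam.ne', ← rpow_add hlam]
    congr 1
    ring
  have hsqrt : √t = t ^ (1 / 2 + δ) * t ^ (-δ) := by
    rw [sqrt_eq_rpow, ← rpow_add ht]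
    congr 1
    ring
  have hε_pow : ε = (ε ^ 2) ^ ((1 - α) / 2) * ε ^ α := by
    rw [← rpow_natCast_mul hε.le, ← rpow_add hε, Nat.cast_ofNat]
    nth_rw 1 [← rpow_one ε]
    congr 1
    ring
  calc lam ^ (δ - α / 2) * |f t - exp (-(lam * t))|
      ≤ lam ^ (δ - α / 2) * (√2 * lam * ε * √t * exp (-(lam * t))) := by
        gcongr
        exact abs_sub_exp_le_of_le_one h hε hlam hreg hf0 hf'0 ht
    _ = √2 * ((lam ^ ((1 - α) / 2) * lam ^ (1 / 2 + δ)) *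
          ((ε ^ 2) ^ ((1 - α) / 2) * ε ^ α) * (t ^ (1 / 2 + δ) * t ^ (-δ))) *
          exp (-(lam * t)) := by
        rw [← hlam_pow, ← hsqrt, ← hε_pow]
        ring
    _ = √2 * ((lam * ε ^ 2) ^ ((1 - α) / 2) * ((lam * t) ^ (1 / 2 + δ) * exp (-(lam * t)))) *
          ε ^ α * t ^ (-δ) := by
        rw [mul_rpow hlam.le (by positivity), mul_rpow hlam.le ht.le]
        ring
    _ ≤ 2 * (1 * 1) * ε ^ α * t ^ (-δ) := by
        gcongr
        · exact sqrt_le_iff.2 ⟨by norm_num, by norm_num⟩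
        · exact rpow_le_one (by positivity) (by linarith) (by linarith)
        · exact rpow_mul_exp_neg_le_one (by positivity) (by linarith) (by linarith)
    _ = 2 * t ^ (-δ) * ε ^ α := by ring

end

theorem stmt14 (α δ : ℝ) (hα : α ∈ Set.Icc (0 : ℝ) 1) (hδ : δ ∈ Set.Icc (0 : ℝ) (α / 2)) :
    ∃ C : ℝ, 0 < C ∧ ∀ (lam ε t : ℝ) (f f' f'' : ℝ → ℝ),
      0 < lam → ε ∈ Set.Ioo (0 : ℝ) 1 → 0 < t →
      (∀ s, HasDerivAt f (f' s) s) → (∀ s, HasDerivAt f' (f'' s) s) →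
      (∀ s, ε ^ 2 * f'' s + f' s + lam * f s = 0) →
      f 0 = 1 → f' 0 = 0 →
      lam ^ (δ - α / 2) * |f t - Real.exp (-(lam * t))| ≤ C * t ^ (-δ) * ε ^ α := by
  refine ⟨24, by norm_num, fun lam ε t f f' f'' hlam ⟨hε, _⟩ ht hf hf' hode hf0 hf'0 => ?_⟩
  have h : SolvesLinearODE2 (ε ^ 2) 1 lam f f' f'' :=
    ⟨hf, hf', fun s => by linear_combination hode s⟩
  rcases le_total 1 (4 * lam * ε ^ 2) with hreg | hreg
  · exact rpow_mul_abs_sub_exp_le_of_one_le h hε hreg hf0 hf'0 ht (by linarith [hα.2]) hδ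
  · calc _ ≤ 2 * t ^ (-δ) * ε ^ α :=
          rpow_mul_abs_sub_exp_le_of_le_one h hε hlam hreg hf0 hf'0 ht hα.2 hδ
      _ ≤ 24 * t ^ (-δ) * ε ^ α := by gcongr; norm_num
end

section
/- For all α ∈ [0,1] and δ ∈ [α/2, 1/2], there exists C ∈ (0,∞) such that: for all λ > 0, ε ∈ (0,1), t > 0, if f solves ε² f'' + f' + λ f = 0 with f(0) = 0, ε f'(0) = 1, then λ^{δ − α/2} |f(t)/ε − e^{−λ t}| ≤ C t^{−δ} ε^{α}. -/
/-!
In the scale-free variables `s = λ t` and `x = ε² λ` the claim reads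
`s ^ δ * |f t / ε - exp (-s)| ≤ C * x ^ (α / 2)`, and the time weights are absorbed by
`s ^ γ * exp (-(s / c)) ≤ c ^ γ` (`0 ≤ γ ≤ 1`).

For `x ≤ 1/8` the characteristic roots are real and, with `r = √(1 - 4x)`,
`f t / ε = (exp (-(2 / (1 + r)) s) - exp (-((1 + r) / (2x)) s)) / r`.
The slow exponential is `exp (-s)` up to a relative error `O(x (1 + s))` and the fast one is
`O(exp (-s / (2x)))`, which gives the bound `O(x + x ^ δ) = O(x ^ (α / 2))`.

For `x ≥ 1/8` the Lyapunov function `ε² f'² + λ f² + f f' / 2` decays like `exp (-t / (4ε²))`,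
so `f t / ε` and `exp (-s)` are separately `O(s ^ (-δ))`, while `x ^ (α / 2)` stays bounded
below.
-/

open Real

lemma rpow_le_one_add {u γ : ℝ} (hu : 0 ≤ u) (hγ0 : 0 ≤ γ) (hγ1 : γ ≤ 1) : u ^ γ ≤ 1 + u := by
  rcases le_total u 1 with hu1 | hu1
  · linarith [rpow_le_one hu hu1 hγ0]
  · calc u ^ γ ≤ u ^ (1 : ℝ) := rpow_le_rpow_of_exponent_le hu1 hγ1
      _ ≤ 1 + u := by rw [rpow_one]; linarith

lemma rpow_mul_exp_neg_le_one_s15 {u γ : ℝ} (hu : 0 ≤ u) (hγ0 : 0 ≤ γ) (hγ1 : γ ≤ 1) :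
    u ^ γ * exp (-u) ≤ 1 := by
  calc u ^ γ * exp (-u) ≤ exp u * exp (-u) := by
        gcongr
        linarith [rpow_le_one_add hu hγ0 hγ1, add_one_le_exp u]
    _ = 1 := by rw [← exp_add, add_neg_cancel, exp_zero]

lemma rpow_mul_exp_neg_div_le {s c γ : ℝ} (hs : 0 ≤ s) (hc : 0 < c) (hγ0 : 0 ≤ γ) (hγ1 : γ ≤ 1) :
    s ^ γ * exp (-(s / c)) ≤ c ^ γ := by
  have h := rpow_mul_exp_neg_le_one_s15 (div_nonneg hs hc.le) hγ0 hγ1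
  rwa [div_rpow hs hc.le, div_mul_eq_mul_div, div_le_one (rpow_pos_of_pos hc γ)] at h

lemma one_add_mul_exp_neg_le (s : ℝ) : (1 + s) * exp (-s) ≤ 2 * exp (-(s / 2)) := by
  have h : 1 + s ≤ 2 * exp (s / 2) := by linarith [add_one_le_exp (s / 2)]
  calc (1 + s) * exp (-s) ≤ 2 * exp (s / 2) * exp (-s) := by gcongr
    _ = 2 * exp (-(s / 2)) := by rw [mul_assoc, ← exp_add]; ring_nf

lemma mul_rpow_le_of_scaled {α δ lam ε t D C : ℝ} (hl : 0 < lam) (hε : 0 < ε) (ht : 0 < t)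
    (h : (lam * t) ^ δ * D ≤ C * (ε ^ 2 * lam) ^ (α / 2)) :
    lam ^ (δ - α / 2) * D ≤ C * t ^ (-δ) * ε ^ α := by
  have hl' : lam ^ (δ - α / 2) = (lam * t) ^ δ * (t ^ (-δ) * lam ^ (-(α / 2))) := by
    rw [mul_rpow hl.le ht.le, rpow_sub hl, rpow_neg hl.le, rpow_neg ht.le]
    field_simp
  have hr : ε ^ α = (ε ^ 2 * lam) ^ (α / 2) * lam ^ (-(α / 2)) := by
    rw [mul_rpow (by positivity) hl.le, ← rpow_natCast, ← rpow_mul hε.le, mul_assoc,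
      ← rpow_add hl, add_neg_cancel, rpow_zero, mul_one]
    push_cast
    ring_nf
  calc lam ^ (δ - α / 2) * D = (lam * t) ^ δ * D * (t ^ (-δ) * lam ^ (-(α / 2))) := by
        rw [hl']; ring
    _ ≤ C * (ε ^ 2 * lam) ^ (α / 2) * (t ^ (-δ) * lam ^ (-(α / 2))) := by gcongr
    _ = C * t ^ (-δ) * ε ^ α := by rw [hr]; ring

lemma eq_zero_of_damped_of_initial_eq_zero {a b c t : ℝ} {y y' y'' : ℝ → ℝ} (ha : 0 ≤ a)
    (hb : 0 ≤ b) (hc : 0 < c) (hy : ∀ s, HasDerivAt y (y' s) s)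
    (hy' : ∀ s, HasDerivAt y' (y'' s) s) (hode : ∀ s, a * y'' s + b * y' s + c * y s = 0)
    (h0 : y 0 = 0) (h0' : y' 0 = 0) (ht : 0 ≤ t) : y t = 0 := by
  have henergy : ∀ s, HasDerivAt (fun s => a * y' s ^ 2 + c * y s ^ 2) (-(2 * b * y' s ^ 2)) s :=
    fun s => (((hy' s).pow 2).const_mul a).add (((hy s).pow 2).const_mul c) |>.congr_deriv (by
      simp only [Nat.cast_ofNat]; linear_combination (2 * y' s) * hode s)
  have hmono := antitone_of_hasDerivAt_nonpos henergy
    (fun s => neg_nonpos.2 (by positivity)) ht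
  simp only [h0, h0'] at hmono
  have : c * y t ^ 2 ≤ 0 := by nlinarith [mul_nonneg ha (sq_nonneg (y' t))]
  exact pow_eq_zero_iff two_ne_zero |>.1 (by nlinarith [sq_nonneg (y t)])

lemma hasDerivAt_exp_const_mul (μ s : ℝ) :
    HasDerivAt (fun s => exp (μ * s)) (μ * exp (μ * s)) s := by
  simpa [mul_comm] using ((hasDerivAt_id s).const_mul μ).exp

lemma damped_eq_of_roots {a b c μ₁ μ₂ t : ℝ} {y y' y'' : ℝ → ℝ} (ha : 0 ≤ a)
    (hb : 0 ≤ b) (hc : 0 < c) (hy : ∀ s, HasDerivAt y (y' s) s)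
    (hy' : ∀ s, HasDerivAt y' (y'' s) s) (hode : ∀ s, a * y'' s + b * y' s + c * y s = 0)
    (hμ₁ : a * μ₁ ^ 2 + b * μ₁ + c = 0) (hμ₂ : a * μ₂ ^ 2 + b * μ₂ + c = 0) (hμ : μ₁ ≠ μ₂)
    (h0 : y 0 = 0) (ht : 0 ≤ t) :
    y t = y' 0 * (exp (μ₁ * t) - exp (μ₂ * t)) / (μ₁ - μ₂) := by
  have hμ' : μ₁ - μ₂ ≠ 0 := sub_ne_zero.2 hμ
  set k := y' 0 / (μ₁ - μ₂)
  have hz := eq_zero_of_damped_of_initial_eq_zero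
    (y := fun s => y s - k * (exp (μ₁ * s) - exp (μ₂ * s)))
    (y' := fun s => y' s - k * (μ₁ * exp (μ₁ * s) - μ₂ * exp (μ₂ * s)))
    (y'' := fun s => y'' s - k * (μ₁ * (μ₁ * exp (μ₁ * s)) - μ₂ * (μ₂ * exp (μ₂ * s))))
    ha hb hc
    (fun s => (hy s).sub (((hasDerivAt_exp_const_mul μ₁ s).sub
      (hasDerivAt_exp_const_mul μ₂ s)).const_mul k))
    (fun s => (hy' s).sub ((((hasDerivAt_exp_const_mul μ₁ s).const_mul μ₁).sub
      ((hasDerivAt_exp_const_mul μ₂ s).const_mul μ₂)).const_mul k))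
    (fun s => by linear_combination hode s - k * exp (μ₁ * s) * hμ₁ + k * exp (μ₂ * s) * hμ₂)
    (by simp [h0]) (by simp only [k, mul_zero, exp_zero, mul_one]; field_simp; ring) ht
  rw [mul_div_right_comm]
  linarith

lemma abs_exp_neg_div_sub_one_le {a r s x : ℝ} (ha0 : 0 ≤ a) (ha : a ≤ 4 * x) (hr : 1 / 2 ≤ r)
    (hr1 : r ≤ 1) (h1r : 1 - r ≤ 4 * x) (hs : 0 ≤ s) :
    |exp (-(a * s)) / r - 1| ≤ 8 * x * (1 + s) := by
  have hr0 : 0 < r := by linarith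
  have hlow : exp (-(a * s)) ≤ exp (-(a * s)) / r := le_div_self (exp_pos _).le hr0 hr1
  have hup : exp (-(a * s)) / r ≤ 1 / r := by gcongr; exact exp_le_one_iff.2 (by nlinarith)
  have hinv : 1 / r ≤ 1 + 8 * x := by rw [div_le_iff₀ hr0]; nlinarith
  have hexp_ge : 1 - a * s ≤ exp (-(a * s)) := by linarith [add_one_le_exp (-(a * s))]
  rw [abs_le]
  constructor <;> nlinarith [mul_le_mul_of_nonneg_right ha hs]

lemma overdamped_profile_bound {x r s : ℝ} (hx : 0 < x) (hx8 : x ≤ 1 / 8) (hr : 0 ≤ r)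
    (hr2 : r ^ 2 = 1 - 4 * x) (hs : 0 ≤ s) :
    |(exp (-((1 - r) / (2 * x) * s)) - exp (-((1 + r) / (2 * x) * s))) / r - exp (-s)|
      ≤ 8 * x * (1 + s) * exp (-s) + 2 * exp (-(s / (2 * x))) := by
  have hr_half : 1 / 2 ≤ r := by nlinarith
  have hr1 : r ≤ 1 := by nlinarith
  have hr0 : 0 < r := by linarith
  have h1r : 1 - r ≤ 4 * x := by nlinarith
  set a := (1 - r) / (1 + r) with ha_def
  have ha0 : 0 ≤ a := div_nonneg (by linarith) (by linarith)
  have ha : a ≤ 4 * x := (div_le_iff₀ (by linarith)).2 (by nlinarith)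
  have hcoef : (1 - r) / (2 * x) = 1 + a := by
    rw [ha_def, div_eq_iff (by positivity)]
    field_simp
    linear_combination -hr2
  have hfast : exp (-((1 + r) / (2 * x) * s)) / r ≤ 2 * exp (-(s / (2 * x))) := by
    rw [div_le_iff₀ hr0]
    have : exp (-((1 + r) / (2 * x) * s)) ≤ exp (-(s / (2 * x))) := by
      gcongr
      rw [div_mul_eq_mul_div]
      gcongr
      nlinarith
    nlinarith [exp_pos (-(s / (2 * x)))]
  calc _ = |exp (-s) * (exp (-(a * s)) / r - 1) - exp (-((1 + r) / (2 * x) * s)) / r| := by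
        rw [hcoef, add_mul, one_mul, neg_add, exp_add]; ring_nf
    _ ≤ exp (-s) * |exp (-(a * s)) / r - 1| + exp (-((1 + r) / (2 * x) * s)) / r := by
        refine (abs_sub _ _).trans ?_
        rw [abs_mul, abs_of_pos (exp_pos _), abs_of_pos (div_pos (exp_pos _) hr0)]
    _ ≤ exp (-s) * (8 * x * (1 + s)) + 2 * exp (-(s / (2 * x))) := by
        gcongr
        exact abs_exp_neg_div_sub_one_le ha0 ha hr_half hr1 h1r hs
    _ = _ := by ring

lemma damped_div_eq_of_overdamped {ε lam r t : ℝ} {f f' f'' : ℝ → ℝ} (hε : 0 < ε)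
    (hl : 0 < lam) (hr : 0 < r) (hr2 : r ^ 2 = 1 - 4 * (ε ^ 2 * lam)) (ht : 0 ≤ t)
    (hf : ∀ s, HasDerivAt f (f' s) s) (hf' : ∀ s, HasDerivAt f' (f'' s) s)
    (hode : ∀ s, ε ^ 2 * f'' s + f' s + lam * f s = 0) (h0 : f 0 = 0) (h1 : ε * f' 0 = 1) :
    f t / ε = (exp (-((1 - r) / (2 * (ε ^ 2 * lam)) * (lam * t)))
      - exp (-((1 + r) / (2 * (ε ^ 2 * lam)) * (lam * t)))) / r := by
  have hroot : ∀ σ : ℝ, σ ^ 2 = 1 - 4 * (ε ^ 2 * lam) →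
      ε ^ 2 * ((-1 + σ) / (2 * ε ^ 2)) ^ 2 + 1 * ((-1 + σ) / (2 * ε ^ 2)) + lam = 0 := by
    intro σ hσ
    field_simp
    linear_combination hσ
  have hsol := damped_eq_of_roots (sq_nonneg ε) zero_le_one hl hf hf'
    (fun s => by rw [one_mul]; exact hode s) (hroot r hr2)
    (by convert hroot (-r) (by rw [neg_sq, hr2]) using 3)
    (by rw [Ne, div_left_inj' (by positivity)]; linarith) h0 ht
  have hf'0 : f' 0 = 1 / ε := by field_simp; linarith
  have hp : (-1 + r) / (2 * ε ^ 2) * t = -((1 - r) / (2 * (ε ^ 2 * lam)) * (lam * t)) := by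
    field_simp; ring
  have hm : (-1 + -r) / (2 * ε ^ 2) * t = -((1 + r) / (2 * (ε ^ 2 * lam)) * (lam * t)) := by
    field_simp; ring
  rw [hsol, hp, hm, hf'0]
  field_simp [hr.ne']
  ring

lemma overdamped_weighted_bound {α δ ε lam t : ℝ} {f f' f'' : ℝ → ℝ} (hδα : α / 2 ≤ δ)
    (hδ0 : 0 ≤ δ) (hδ1 : δ ≤ 1) (hε : 0 < ε) (hl : 0 < lam) (hx : ε ^ 2 * lam ≤ 1 / 8)
    (ht : 0 ≤ t) (hf : ∀ s, HasDerivAt f (f' s) s) (hf' : ∀ s, HasDerivAt f' (f'' s) s)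
    (hode : ∀ s, ε ^ 2 * f'' s + f' s + lam * f s = 0) (h0 : f 0 = 0) (h1 : ε * f' 0 = 1) :
    (lam * t) ^ δ * |f t / ε - exp (-(lam * t))| ≤ 36 * (ε ^ 2 * lam) ^ (α / 2) := by
  set r := √(1 - 4 * (ε ^ 2 * lam))
  have hr2 : r ^ 2 = 1 - 4 * (ε ^ 2 * lam) := sq_sqrt (by linarith)
  have hr0 : 0 < r := sqrt_pos.2 (by linarith)
  rw [damped_div_eq_of_overdamped hε hl hr0 hr2 ht hf hf' hode h0 h1]
  set x := ε ^ 2 * lam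
  set s := lam * t
  have hx0 : 0 < x := by positivity
  have hx1 : x ≤ 1 := by linarith
  have hs : 0 ≤ s := by positivity
  have hslow : s ^ δ * ((1 + s) * exp (-s)) ≤ 4 := by
    calc s ^ δ * ((1 + s) * exp (-s)) ≤ s ^ δ * (2 * exp (-(s / 2))) :=
          mul_le_mul_of_nonneg_left (one_add_mul_exp_neg_le s) (by positivity)
      _ = 2 * (s ^ δ * exp (-(s / 2))) := by ring
      _ ≤ 2 * (2 : ℝ) ^ (1 : ℝ) := by
          gcongr
          exact (rpow_mul_exp_neg_div_le hs two_pos hδ0 hδ1).trans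
            (rpow_le_rpow_of_exponent_le one_le_two hδ1)
      _ = 4 := by norm_num
  have hfast : s ^ δ * exp (-(s / (2 * x))) ≤ 2 * x ^ (α / 2) :=
    calc s ^ δ * exp (-(s / (2 * x))) ≤ (2 * x) ^ δ :=
          rpow_mul_exp_neg_div_le hs (by positivity) hδ0 hδ1
      _ = 2 ^ δ * x ^ δ := mul_rpow zero_le_two hx0.le
      _ ≤ 2 ^ (1 : ℝ) * x ^ (α / 2) :=
          mul_le_mul (rpow_le_rpow_of_exponent_le one_le_two hδ1)
            (rpow_le_rpow_of_exponent_ge hx0 hx1 hδα) (by positivity) (by positivity)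
      _ = 2 * x ^ (α / 2) := by rw [rpow_one]
  have hx_le : x ≤ x ^ (α / 2) := by
    simpa using rpow_le_rpow_of_exponent_ge hx0 hx1 (hδα.trans hδ1)
  calc _ ≤ s ^ δ * (8 * x * (1 + s) * exp (-s) + 2 * exp (-(s / (2 * x)))) := by
        gcongr; exact overdamped_profile_bound hx0 hx hr0.le hr2 hs
    _ = 8 * x * (s ^ δ * ((1 + s) * exp (-s))) + 2 * (s ^ δ * exp (-(s / (2 * x)))) := by ring
    _ ≤ 8 * x ^ (α / 2) * 4 + 2 * (2 * x ^ (α / 2)) := by gcongr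
    _ = 36 * x ^ (α / 2) := by ring

noncomputable def dampedLyapunov (ε lam : ℝ) (f f' : ℝ → ℝ) (s : ℝ) : ℝ :=
  ε ^ 2 * f' s ^ 2 + lam * f s ^ 2 + f s * f' s / 2

section Underdamped

variable {ε lam : ℝ} {f f' f'' : ℝ → ℝ}

lemma sq_pos_of_underdamped (hx : 1 / 8 ≤ ε ^ 2 * lam) : 0 < ε ^ 2 := by
  refine (sq_nonneg ε).lt_of_ne fun h => ?_
  rw [← h, zero_mul] at hx
  norm_num at hx

lemma mul_sq_le_dampedLyapunov (hx : 1 / 8 ≤ ε ^ 2 * lam) (s : ℝ) :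
    lam * f s ^ 2 ≤ 4 * dampedLyapunov ε lam f f' s := by
  have he2 := sq_pos_of_underdamped hx
  have h : 0 ≤ ε ^ 2 * (4 * dampedLyapunov ε lam f f' s - lam * f s ^ 2) := by
    unfold dampedLyapunov
    nlinarith [sq_nonneg (2 * ε ^ 2 * f' s + f s / 2),
      mul_nonneg (sub_nonneg.2 hx) (sq_nonneg (f s))]
  linarith [nonneg_of_mul_nonneg_right h he2]

lemma dampedLyapunov_le_mul_exp (hx : 1 / 8 ≤ ε ^ 2 * lam)
    (hf : ∀ s, HasDerivAt f (f' s) s) (hf' : ∀ s, HasDerivAt f' (f'' s) s)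
    (hode : ∀ s, ε ^ 2 * f'' s + f' s + lam * f s = 0) {t : ℝ} (ht : 0 ≤ t) :
    dampedLyapunov ε lam f f' t ≤ dampedLyapunov ε lam f f' 0 * exp (-(t / (4 * ε ^ 2))) := by
  have he2 := sq_pos_of_underdamped hx
  set H := dampedLyapunov ε lam f f'
  set H' : ℝ → ℝ := fun s => ε ^ 2 * (2 * f' s * f'' s) + lam * (2 * f s * f' s)
    + (f' s * f' s + f s * f'' s) / 2
  have hH : ∀ s, HasDerivAt H (H' s) s := fun s =>
    ((((hf' s).pow 2).const_mul _).add (((hf s).pow 2).const_mul _)).add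
      (((hf s).mul (hf' s)).div_const 2) |>.congr_deriv (by simp only [H']; push_cast; ring)
  have hdiss : ∀ s, 4 * ε ^ 2 * H' s + H s ≤ 0 := by
    intro s
    -- discriminant: `(3/2)² ≤ 4 * 5 ε² λ` as soon as `ε² λ ≥ 9/80`
    have h : 0 ≤ ε ^ 2 * (5 * ε ^ 2 * f' s ^ 2 + 3 / 2 * f s * f' s + lam * f s ^ 2) := by
      nlinarith [sq_nonneg (ε ^ 2 * f' s + f s / 6), sq_nonneg (ε ^ 2 * f' s),
        mul_nonneg (sub_nonneg.2 hx) (sq_nonneg (f s))]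
    have h' := nonneg_of_mul_nonneg_right h he2
    have hid : 4 * ε ^ 2 * H' s + H s
        = -(5 * ε ^ 2 * f' s ^ 2 + 3 / 2 * f s * f' s + lam * f s ^ 2) := by
      simp only [H, H', dampedLyapunov]
      linear_combination (8 * ε ^ 2 * f' s + 2 * f s) * hode s
    linarith
  have hanti : Antitone fun s => H s * exp (s / (4 * ε ^ 2)) := by
    refine antitone_of_hasDerivAt_nonpos (fun s => (hH s).mul
      ((hasDerivAt_id s).div_const _).exp) fun s => ?_
    have hrate : H' s + H s / (4 * ε ^ 2) ≤ 0 := by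
      rw [show H' s + H s / (4 * ε ^ 2) = (4 * ε ^ 2 * H' s + H s) / (4 * ε ^ 2) by
        rw [add_div, mul_div_cancel_left₀ _ (by positivity)]]
      exact div_nonpos_of_nonpos_of_nonneg (hdiss s) (by positivity)
    calc _ = (H' s + H s / (4 * ε ^ 2)) * exp (s / (4 * ε ^ 2)) := by simp only [id]; ring
      _ ≤ 0 := mul_nonpos_of_nonpos_of_nonneg hrate (exp_pos _).le
  have h := hanti ht
  simp only [zero_div, exp_zero, mul_one] at h
  calc H t = H t * exp (t / (4 * ε ^ 2)) * exp (-(t / (4 * ε ^ 2))) := by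
        rw [mul_assoc, ← exp_add, add_neg_cancel, exp_zero, mul_one]
    _ ≤ H 0 * exp (-(t / (4 * ε ^ 2))) := by gcongr

lemma mul_sq_le_exp_of_underdamped {t : ℝ} (hx : 1 / 8 ≤ ε ^ 2 * lam) (ht : 0 ≤ t)
    (hf : ∀ s, HasDerivAt f (f' s) s) (hf' : ∀ s, HasDerivAt f' (f'' s) s)
    (hode : ∀ s, ε ^ 2 * f'' s + f' s + lam * f s = 0) (h0 : f 0 = 0) (h1 : ε * f' 0 = 1) :
    lam * f t ^ 2 ≤ 4 * exp (-(t / (4 * ε ^ 2))) := by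
  have hH0 : dampedLyapunov ε lam f f' 0 = 1 := by
    unfold dampedLyapunov
    rw [h0]
    linear_combination (ε * f' 0 + 1) * h1
  calc lam * f t ^ 2 ≤ 4 * dampedLyapunov ε lam f f' t := mul_sq_le_dampedLyapunov hx t
    _ ≤ 4 * (dampedLyapunov ε lam f f' 0 * exp (-(t / (4 * ε ^ 2)))) := by
        gcongr; exact dampedLyapunov_le_mul_exp hx hf hf' hode ht
    _ = 4 * exp (-(t / (4 * ε ^ 2))) := by rw [hH0, one_mul]

lemma underdamped_weighted_bound {α δ t : ℝ} (hα0 : 0 ≤ α) (hδα : α / 2 ≤ δ) (hδ : δ ≤ 1 / 2)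
    (hl : 0 < lam) (hx : 1 / 8 ≤ ε ^ 2 * lam) (ht : 0 ≤ t)
    (hf : ∀ s, HasDerivAt f (f' s) s) (hf' : ∀ s, HasDerivAt f' (f'' s) s)
    (hode : ∀ s, ε ^ 2 * f'' s + f' s + lam * f s = 0) (h0 : f 0 = 0) (h1 : ε * f' 0 = 1) :
    (lam * t) ^ δ * |f t / ε - exp (-(lam * t))| ≤ 64 * (ε ^ 2 * lam) ^ (α / 2) := by
  have he2 := sq_pos_of_underdamped hx
  set x := ε ^ 2 * lam with hx_def
  set s := lam * t with hs_def
  have hs : 0 ≤ s := by positivity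
  have hδ0 : 0 ≤ δ := by linarith
  have henergy : x * (f t / ε) ^ 2 ≤ 4 * exp (-(s / (4 * x))) := by
    have hε : ε ≠ 0 := by rintro rfl; simp at he2
    rw [show x * (f t / ε) ^ 2 = lam * f t ^ 2 by rw [hx_def]; field_simp,
      show s / (4 * x) = t / (4 * ε ^ 2) by rw [hx_def, hs_def]; field_simp]
    exact mul_sq_le_exp_of_underdamped hx ht hf hf' hode h0 h1
  have hf_weighted : s ^ δ * |f t / ε| ≤ 7 := by
    have hsq : x * (s ^ δ * |f t / ε|) ^ 2 ≤ 4 * (1 + 4 * x) := by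
      calc x * (s ^ δ * |f t / ε|) ^ 2 = s ^ (2 * δ) * (x * (f t / ε) ^ 2) := by
            rw [mul_pow, sq_abs, show 2 * δ = δ * (2 : ℕ) by push_cast; ring,
              rpow_mul_natCast hs]
            ring
        _ ≤ s ^ (2 * δ) * (4 * exp (-(s / (4 * x)))) := by gcongr
        _ = 4 * (s ^ (2 * δ) * exp (-(s / (4 * x)))) := by ring
        _ ≤ 4 * (4 * x) ^ (2 * δ) := by
            gcongr; exact rpow_mul_exp_neg_div_le hs (by positivity) (by linarith) (by linarith)
        _ ≤ 4 * (1 + 4 * x) := by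
            gcongr; exact rpow_le_one_add (by positivity) (by linarith) (by linarith)
    have hY : 0 ≤ s ^ δ * |f t / ε| := by positivity
    by_contra! h7
    have h49 : 49 < (s ^ δ * |f t / ε|) ^ 2 := by nlinarith
    nlinarith [mul_lt_mul_of_pos_left h49 (by linarith : (0 : ℝ) < x)]
  have hexp : s ^ δ * exp (-s) ≤ 1 := rpow_mul_exp_neg_le_one_s15 hs hδ0 (by linarith)
  have hx_rpow : 1 ≤ 8 * x ^ (α / 2) := by
    have : (1 / 8 : ℝ) ^ (1 : ℝ) ≤ x ^ (α / 2) :=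
      (rpow_le_rpow_of_exponent_ge (by norm_num) (by norm_num) (by linarith)).trans
        (rpow_le_rpow (by norm_num) hx (by linarith))
    rw [rpow_one] at this
    linarith
  calc s ^ δ * |f t / ε - exp (-s)| ≤ s ^ δ * (|f t / ε| + exp (-s)) := by
        gcongr
        exact (abs_sub _ _).trans_eq (by rw [abs_of_pos (exp_pos _)])
    _ ≤ 8 := by linarith
    _ ≤ 64 * x ^ (α / 2) := by linarith

end Underdamped

theorem stmt15 (α δ : ℝ) (hα : α ∈ Set.Icc (0 : ℝ) 1) (hδ : δ ∈ Set.Icc (α / 2) (1 / 2)) :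
    ∃ C : ℝ, 0 < C ∧ ∀ (lam ε t : ℝ) (f f' f'' : ℝ → ℝ),
      0 < lam → ε ∈ Set.Ioo (0 : ℝ) 1 → 0 < t →
      (∀ s, HasDerivAt f (f' s) s) → (∀ s, HasDerivAt f' (f'' s) s) →
      (∀ s, ε ^ 2 * f'' s + f' s + lam * f s = 0) →
      f 0 = 0 → ε * f' 0 = 1 →
      lam ^ (δ - α / 2) * |f t / ε - Real.exp (-(lam * t))| ≤ C * t ^ (-δ) * ε ^ α := by
  obtain ⟨hα0, -⟩ := hα
  obtain ⟨hδα, hδ_half⟩ := hδ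
  refine ⟨64, by norm_num, fun lam ε t f f' f'' hl hε ht hf hf' hode h0 h1 => ?_⟩
  refine mul_rpow_le_of_scaled hl hε.1 ht ?_
  rcases le_or_gt (ε ^ 2 * lam) (1 / 8) with hx | hx
  · refine (overdamped_weighted_bound hδα (by linarith) (by linarith) hε.1 hl hx ht.le
      hf hf' hode h0 h1).trans ?_
    gcongr
    norm_num
  · exact underdamped_weighted_bound hα0 hδα hδ_half hl hx.le ht.le hf hf' hode h0 h1
end
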